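/- arXiv:1310.6266 — 8 statements merged into one kernel-verified Lean document; each statement's English description precedes it below -/
import Mathlib

section
/- Let A and B be non-empty finite sets of non-negative integers. Then |A + B| = |A| · |B| if and only if the difference sets D_A and D_B are disjoint, where D_A = {a - a' : a, a' ∈ A, a > a'} is the set of positive differences between elements of A (and similarly for D_B). -/
open Pointwise

/-- The difference set of a finite set `A` of non-negative integers:
the set of positive differences `a - a'` with `a, a' ∈ A`, `a > a'`. -/
def diffSet (A : Finset ℕ) : Finset ℕ :=
  ((A ×ˢ A).filter fun p => p.2 < p.1).image fun p => p.1 - p.2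

/-- `f` is an integer additive set-indexer (IASI) of the simple graph `G`:
`f` is injective, assigns nonempty finite sets of non-negative integers to vertices,
and the induced edge function `f⁺(uv) = f(u) + f(v)` is injective on edges. -/
def IsIASI {V : Type*} (G : SimpleGraph V) (f : V → Finset ℕ) : Prop :=
  Function.Injective f ∧ (∀ v, (f v).Nonempty) ∧
    ∀ ⦃u v u' v' : V⦄, G.Adj u v → G.Adj u' v' →
      f u + f v = f u' + f v' → s(u, v) = s(u', v')

/-- A strong IASI: `|f⁺(uv)| = |f(u)| * |f(v)|` for all edges `uv`. -/
def IsStrongIASI {V : Type*} (G : SimpleGraph V) (f : V → Finset ℕ) : Prop :=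
  IsIASI G f ∧ ∀ ⦃u v : V⦄, G.Adj u v → (f u + f v).card = (f u).card * (f v).card

/-- A strongly `k`-uniform IASI: `|f⁺(uv)| = |f(u)| * |f(v)| = k` for all edges `uv`. -/
def IsStronglyUniformIASI {V : Type*} (G : SimpleGraph V) (f : V → Finset ℕ) (k : ℕ) : Prop :=
  IsStrongIASI G f ∧ ∀ ⦃u v : V⦄, G.Adj u v → (f u + f v).card = k

/-- A weakly `k`-uniform IASI: `|f⁺(uv)| = max(|f(u)|, |f(v)|) = k` for all edges `uv`. -/
def IsWeaklyUniformIASI {V : Type*} (G : SimpleGraph V) (f : V → Finset ℕ) (k : ℕ) : Prop :=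
  IsIASI G f ∧ ∀ ⦃u v : V⦄, G.Adj u v →
    (f u + f v).card = max (f u).card (f v).card ∧ (f u + f v).card = k

open Finset

theorem mem_diffSet {A : Finset ℕ} {d : ℕ} :
    d ∈ diffSet A ↔ ∃ a ∈ A, ∃ a' ∈ A, a' < a ∧ a - a' = d := by
  simp [diffSet, and_assoc]

theorem sub_mem_diffSet {A : Finset ℕ} {a a' : ℕ} (ha : a ∈ A) (ha' : a' ∈ A) (h : a' < a) :
    a - a' ∈ diffSet A :=
  mem_diffSet.2 ⟨a, ha, a', ha', h, rfl⟩

-- A collision `a + b = a' + b'` with `a' < a` exhibits `a - a' = b' - b` in both difference sets.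
theorem add_ne_add_of_disjoint_diffSet {A B : Finset ℕ} (hd : Disjoint (diffSet A) (diffSet B))
    {a a' b b' : ℕ} (ha : a ∈ A) (ha' : a' ∈ A) (hb : b ∈ B) (hb' : b' ∈ B) (hlt : a' < a) :
    a + b ≠ a' + b' := by
  intro hsum
  have hB : a - a' ∈ diffSet B := by
    simpa [show b' - b = a - a' by omega] using sub_mem_diffSet hb' hb (by omega)
  exact disjoint_left.1 hd (sub_mem_diffSet ha ha' hlt) hB

theorem injOn_add_iff_disjoint_diffSet (A B : Finset ℕ) :
    (A ×ˢ B : Set (ℕ × ℕ)).InjOn (fun p => p.1 + p.2) ↔ Disjoint (diffSet A) (diffSet B) := by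
  constructor
  · intro hinj
    rw [disjoint_left]
    intro d hdA hdB
    obtain ⟨a, ha, a', ha', hlt, rfl⟩ := mem_diffSet.1 hdA
    obtain ⟨b, hb, b', hb', hlt', hdb⟩ := mem_diffSet.1 hdB
    have hcoll := @hinj (a', b) ⟨ha', hb⟩ (a, b') ⟨ha, hb'⟩ (by dsimp only; omega)
    simp only [Prod.mk.injEq] at hcoll
    omega
  · rintro hd ⟨a, b⟩ ⟨ha, hb⟩ ⟨a', b'⟩ ⟨ha', hb'⟩ (hsum : a + b = a' + b')
    rcases lt_trichotomy a a' with hlt | rfl | hlt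
    · exact absurd hsum.symm (add_ne_add_of_disjoint_diffSet hd ha' ha hb' hb hlt)
    · simp only [Prod.mk.injEq, true_and]
      omega
    · exact absurd hsum (add_ne_add_of_disjoint_diffSet hd ha ha' hb hb' hlt)

theorem sumset_card_eq_mul_iff_disjoint_diffSet_general (A B : Finset ℕ) :
    (A + B).card = A.card * B.card ↔ Disjoint (diffSet A) (diffSet B) :=
  card_add_iff.trans (injOn_add_iff_disjoint_diffSet A B)

/-- For nonempty finite sets `A, B ⊆ ℕ`, `|A + B| = |A| * |B|` iff the
difference sets `D_A` and `D_B` are disjoint. -/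
theorem sumset_card_eq_mul_iff_disjoint_diffSet (A B : Finset ℕ)
    (hA : A.Nonempty) (hB : B.Nonempty) :
    (A + B).card = A.card * B.card ↔ Disjoint (diffSet A) (diffSet B) :=
  sumset_card_eq_mul_iff_disjoint_diffSet_general A B
end

section
/- For every positive integer k, every finite bipartite simple graph admits a strongly k-uniform integer additive set-indexer. -/
open Pointwise

/-
A bipartite graph with sides `s` and `t` is labelled by giving each `u ∈ s` a singleton `{a_u}`
with `a_u < n` and each `v ∈ t` a set `n · B_v` of `k` positive multiples of `n`, the `B_v`
pairwise distinct. Every edge sum `{a_u} + n · B_v` then has `1 · k = k` elements, and it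
determines the edge: its elements are all `≡ a_u (mod n)`, and subtracting `a_u` and dividing
by `n` recovers `B_v`.
-/

open Finset Function

theorem eq_and_eq_of_singleton_add_image_mul_eq {n a a' : ℕ} {B B' : Finset ℕ} (ha : a < n)
    (ha' : a' < n) (hB : B.Nonempty) (h : {a} + B.image (n * ·) = {a'} + B'.image (n * ·)) :
    a = a' ∧ B = B' := by
  obtain ⟨x, hx⟩ := hB
  have hmem : a + n * x ∈ {a'} + B'.image (n * ·) :=
    h ▸ add_mem_add (mem_singleton_self a) (mem_image_of_mem _ hx)
  obtain ⟨_, hb, _, hy, hxy⟩ := mem_add.1 hmem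
  obtain ⟨y, -, rfl⟩ := mem_image.1 hy
  rw [mem_singleton.1 hb] at hxy
  obtain rfl : a = a' := by
    simpa [Nat.add_mul_mod_self_left, Nat.mod_eq_of_lt, ha, ha'] using congrArg (· % n) hxy.symm
  refine ⟨rfl, image_injective (mul_right_injective₀ (Nat.zero_lt_of_lt ha).ne') ?_⟩
  rw [singleton_add, singleton_add] at h
  exact image_injective (add_right_injective a) h

def block (k j : ℕ) : Finset ℕ :=
  Ioc (k * j) (k * j + k)

theorem card_block (k j : ℕ) : #(block k j) = k := by
  simp [block]

theorem block_nonempty {k : ℕ} (hk : 0 < k) (j : ℕ) : (block k j).Nonempty :=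
  nonempty_Ioc.2 (by omega)

theorem pos_of_mem_block {k j x : ℕ} (hx : x ∈ block k j) : 0 < x := by
  simp only [block, mem_Ioc] at hx
  omega

theorem block_injective {k : ℕ} (hk : 0 < k) : Injective (block k) := by
  intro i j hij
  have hi : k * i + 1 ∈ block k j := hij ▸ mem_Ioc.2 ⟨by omega, by omega⟩
  have hj : k * j + 1 ∈ block k i := hij ▸ mem_Ioc.2 ⟨by omega, by omega⟩
  simp only [block, mem_Ioc] at hi hj
  exact Nat.eq_of_mul_eq_mul_left hk (by omega)

section bipartiteLabel

variable {V : Type*} {n k : ℕ} {idx : V → ℕ} {s : Set V} [DecidablePred (· ∈ s)] {u v u' v' : V}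

def bipartiteLabel (n k : ℕ) (idx : V → ℕ) (s : Set V) [DecidablePred (· ∈ s)] (v : V) :
    Finset ℕ :=
  if v ∈ s then {idx v} else (block k (idx v)).image (n * ·)

theorem bipartiteLabel_of_mem (hv : v ∈ s) : bipartiteLabel n k idx s v = {idx v} :=
  if_pos hv

theorem bipartiteLabel_of_notMem (hv : v ∉ s) :
    bipartiteLabel n k idx s v = (block k (idx v)).image (n * ·) :=
  if_neg hv

theorem card_bipartiteLabel_of_mem (hv : v ∈ s) : #(bipartiteLabel n k idx s v) = 1 := by
  rw [bipartiteLabel_of_mem hv, card_singleton]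

theorem card_bipartiteLabel_of_notMem (hn : 0 < n) (hv : v ∉ s) :
    #(bipartiteLabel n k idx s v) = k := by
  rw [bipartiteLabel_of_notMem hv, card_image_of_injective _ (mul_right_injective₀ hn.ne'),
    card_block]

theorem card_bipartiteLabel_add (hn : 0 < n) (hu : u ∈ s) (hv : v ∉ s) :
    #(bipartiteLabel n k idx s u + bipartiteLabel n k idx s v) = k := by
  rw [bipartiteLabel_of_mem hu, card_singleton_add, card_bipartiteLabel_of_notMem hn hv]

theorem bipartiteLabel_nonempty (hk : 0 < k) (v : V) : (bipartiteLabel n k idx s v).Nonempty := by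
  by_cases hv : v ∈ s
  · simp [bipartiteLabel_of_mem hv]
  · exact bipartiteLabel_of_notMem hv ▸ (block_nonempty hk _).image _

theorem bipartiteLabel_ne (hlt : ∀ v, idx v < n) (hu : u ∈ s) (hv : v ∉ s) :
    bipartiteLabel n k idx s u ≠ bipartiteLabel n k idx s v := by
  intro huv
  have hmem : idx u ∈ bipartiteLabel n k idx s v := huv ▸ by simp [bipartiteLabel_of_mem hu]
  rw [bipartiteLabel_of_notMem hv] at hmem
  obtain ⟨x, hx, hxu⟩ := mem_image.1 hmem
  have := hlt u
  have := Nat.le_mul_of_pos_right n (pos_of_mem_block hx)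
  omega

theorem bipartiteLabel_injective (hk : 0 < k) (hinj : Injective idx) (hlt : ∀ v, idx v < n) :
    Injective (bipartiteLabel n k idx s) := by
  intro u v huv
  by_cases hu : u ∈ s <;> by_cases hv : v ∈ s
  · rw [bipartiteLabel_of_mem hu, bipartiteLabel_of_mem hv, singleton_inj] at huv
    exact hinj huv
  · exact absurd huv (bipartiteLabel_ne hlt hu hv)
  · exact absurd huv.symm (bipartiteLabel_ne hlt hv hu)
  · rw [bipartiteLabel_of_notMem hu, bipartiteLabel_of_notMem hv] at huv
    have hn : 0 < n := Nat.zero_lt_of_lt (hlt u)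
    exact hinj (block_injective hk (image_injective (mul_right_injective₀ hn.ne') huv))

theorem eq_and_eq_of_bipartiteLabel_add_eq (hk : 0 < k) (hinj : Injective idx)
    (hlt : ∀ v, idx v < n) (hu : u ∈ s) (hv : v ∉ s) (hu' : u' ∈ s) (hv' : v' ∉ s)
    (h : bipartiteLabel n k idx s u + bipartiteLabel n k idx s v =
      bipartiteLabel n k idx s u' + bipartiteLabel n k idx s v') :
    u = u' ∧ v = v' := by
  rw [bipartiteLabel_of_mem hu, bipartiteLabel_of_notMem hv, bipartiteLabel_of_mem hu',
    bipartiteLabel_of_notMem hv'] at h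
  obtain ⟨hidx, hblock⟩ :=
    eq_and_eq_of_singleton_add_image_mul_eq (hlt u) (hlt u') (block_nonempty hk _) h
  exact ⟨hinj hidx, hinj (block_injective hk hblock)⟩

end bipartiteLabel

namespace SimpleGraph.IsBipartiteWith

variable {V : Type*} {G : SimpleGraph V} {s t : Set V}

theorem forall_adj (h : G.IsBipartiteWith s t) {P : V → V → Prop}
    (symm : ∀ ⦃u v⦄, P u v → P v u) (base : ∀ ⦃u v⦄, u ∈ s → v ∉ s → P u v)
    ⦃u v : V⦄ (huv : G.Adj u v) : P u v := by
  have hts : ∀ ⦃w⦄, w ∈ t → w ∉ s := fun _ hw => Set.disjoint_right.1 h.disjoint hw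
  rcases h.mem_of_adj huv with ⟨hu, hv⟩ | ⟨hu, hv⟩
  · exact base hu (hts hv)
  · exact symm (base hv (hts hu))

theorem isStronglyUniformIASI_bipartiteLabel [DecidablePred (· ∈ s)] {n k : ℕ} {idx : V → ℕ}
    (h : G.IsBipartiteWith s t) (hk : 0 < k) (hinj : Injective idx) (hlt : ∀ v, idx v < n) :
    IsStronglyUniformIASI G (bipartiteLabel n k idx s) k := by
  set f := bipartiteLabel n k idx s
  refine ⟨⟨⟨bipartiteLabel_injective hk hinj hlt, bipartiteLabel_nonempty hk, ?_⟩, ?_⟩, ?_⟩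
  · -- Orient both edges from `s` to its complement; swapping an edge's ends changes neither side.
    intro u v u' v' huv hu'v'
    refine h.forall_adj (P := fun u v => f u + f v = f u' + f v' → s(u, v) = s(u', v'))
      (fun u v H e => Sym2.eq_swap.trans (H (add_comm (f v) _ ▸ e))) (fun u v hu hv => ?_) huv
    refine h.forall_adj (P := fun u' v' => f u + f v = f u' + f v' → s(u, v) = s(u', v'))
      (fun u' v' H e => (H (add_comm (f u') _ ▸ e)).trans Sym2.eq_swap)
      (fun u' v' hu' hv' e => ?_) hu'v'
    obtain ⟨rfl, rfl⟩ := eq_and_eq_of_bipartiteLabel_add_eq hk hinj hlt hu hv hu' hv' e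
    rfl
  · refine h.forall_adj (fun u v H => by rwa [add_comm, mul_comm]) fun u v hu hv => ?_
    have hn : 0 < n := Nat.zero_lt_of_lt (hlt u)
    rw [card_bipartiteLabel_add hn hu hv, card_bipartiteLabel_of_mem hu,
      card_bipartiteLabel_of_notMem hn hv, one_mul]
  · exact h.forall_adj (fun u v H => by rwa [add_comm])
      fun u v hu hv => card_bipartiteLabel_add (Nat.zero_lt_of_lt (hlt u)) hu hv

end SimpleGraph.IsBipartiteWith

/-- For every positive integer `k`, every finite bipartite simple graph admits a
strongly `k`-uniform IASI.  (Bipartite is expressed as 2-colorability.) -/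
theorem bipartite_admits_stronglyUniformIASI {V : Type*} [Fintype V] (G : SimpleGraph V)
    (hG : G.Colorable 2) (k : ℕ) (hk : 0 < k) :
    ∃ f : V → Finset ℕ, IsStronglyUniformIASI G f k := by
  classical
  obtain ⟨s, t, h⟩ := SimpleGraph.IsBipartite.exists_isBipartiteWith hG
  let e := Fintype.equivFin V
  exact ⟨_, h.isStronglyUniformIASI_bipartiteLabel hk (Fin.val_injective.comp e.injective)
    fun v => (e v).isLt⟩
end

section
/- Let p be a prime number and let f be a strongly p-uniform integer additive set-indexer of a simple graph G. Then f is also a weakly p-uniform IASI of G; that is, for every edge uv of G, one end vertex has set-indexing number 1 and the other has set-indexing number p (so |f⁺(uv)| = max(|f(u)|, |f(v)|) = p). -/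
open Pointwise

namespace IsStronglyUniformIASI

variable {V : Type*} {G : SimpleGraph V} {f : V → Finset ℕ} {k : ℕ}

theorem card_mul_card_eq (hf : IsStronglyUniformIASI G f k) {u v : V} (huv : G.Adj u v) :
    (f u).card * (f v).card = k :=
  (hf.1.2 huv).symm.trans (hf.2 huv)

theorem card_eq_one_and_prime_or (hf : IsStronglyUniformIASI G f k) (hk : k.Prime) {u v : V}
    (huv : G.Adj u v) :
    ((f u).card = 1 ∧ (f v).card = k) ∨ ((f u).card = k ∧ (f v).card = 1) := by
  have hmul := hf.card_mul_card_eq huv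
  rcases Nat.prime_mul_iff.mp (hmul ▸ hk) with ⟨-, hv⟩ | ⟨-, hu⟩
  · exact Or.inr ⟨by simpa [hv] using hmul, hv⟩
  · exact Or.inl ⟨hu, by simpa [hu] using hmul⟩

theorem isWeaklyUniformIASI (hf : IsStronglyUniformIASI G f k)
    (hone : ∀ ⦃u v : V⦄, G.Adj u v → (f u).card = 1 ∨ (f v).card = 1) :
    IsWeaklyUniformIASI G f k := by
  refine ⟨hf.1.1, fun u v huv => ⟨?_, hf.2 huv⟩⟩
  have hpos : ∀ w, 1 ≤ (f w).card := fun w => Finset.one_le_card.mpr (hf.1.1.2.1 w)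
  rw [hf.1.2 huv]
  rcases hone huv with hu | hv
  · simpa [hu] using hpos v
  · simpa [hv] using hpos u

end IsStronglyUniformIASI

/-- If `p` is prime and `f` is a strongly `p`-uniform IASI of `G`, then `f` is also
a weakly `p`-uniform IASI: on every edge one end vertex has set-indexing number 1 and the
other has set-indexing number `p`, so `|f⁺(uv)| = max(|f(u)|, |f(v)|) = p`. -/
theorem stronglyUniformIASI_prime_is_weaklyUniform {V : Type*} (G : SimpleGraph V)
    (f : V → Finset ℕ) (p : ℕ) (hp : p.Prime) (hf : IsStronglyUniformIASI G f p) :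
    (∀ ⦃u v : V⦄, G.Adj u v →
        ((f u).card = 1 ∧ (f v).card = p) ∨ ((f u).card = p ∧ (f v).card = 1)) ∧
      IsWeaklyUniformIASI G f p := by
  have hends := fun ⦃u v : V⦄ (huv : G.Adj u v) => hf.card_eq_one_and_prime_or hp huv
  refine ⟨hends, hf.isWeaklyUniformIASI fun u v huv => ?_⟩
  rcases hends huv with ⟨hu, -⟩ | ⟨-, hv⟩
  exacts [Or.inl hu, Or.inr hv]
end

section
/- Let G be a finite bipartite simple graph with at least one edge, and let k be a positive integer. Then G admits a strongly k-uniform integer additive set-indexer that is not a weakly k-uniform IASI (i.e., its weakly and strongly k-uniform IASIs can be chosen distinct) if and only if k is a composite number. -/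
open Pointwise

/-!
If `f` is a strong IASI, then `|f u + f v| = |f u| * |f v|` equals `max |f u| |f v|` exactly when
one of the two factors is `1`, so an edge on which `f` fails to be weakly uniform writes `k` as a
product of two factors larger than `1`.

Conversely, for `k = m * n`, colour `G` with two colours, number the vertices injectively by `ι`
and give `v` the translate by `2 ^ ι v` of `{0, …, m - 1}` or of `{0, m, …, m (n - 1)}`,
according to its colour. Along every edge the sum set is the translate of `{0, …, mn - 1}` by
`2 ^ ι u + 2 ^ ι v`; its minimum recovers this number, whose binary expansion recovers the edge.
-/

open Finset Function

theorem Finset.range_add_image_mul_range (m n : ℕ) :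
    range m + (range n).image (m * ·) = range (m * n) := by
  ext x
  simp only [mem_add, mem_image, mem_range]
  constructor
  · rintro ⟨i, hi, _, ⟨j, hj, rfl⟩, rfl⟩
    calc i + m * j < m * (j + 1) := by linarith
      _ ≤ m * n := Nat.mul_le_mul_left m hj
  · intro hx
    have hm : 0 < m := Nat.pos_of_mul_pos_right (x.zero_le.trans_lt hx)
    exact ⟨x % m, Nat.mod_lt x hm, _, ⟨x / m, Nat.div_lt_of_lt_mul hx, rfl⟩, Nat.mod_add_div x m⟩

theorem Finset.min_singleton_add_of_zero_mem (a : ℕ) {s : Finset ℕ} (hs : 0 ∈ s) :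
    ({a} + s).min = a :=
  le_antisymm (min_le (add_mem_add (mem_singleton_self a) hs)) <| Finset.le_min fun x hx => by
    obtain ⟨_, ha, y, -, rfl⟩ := mem_add.1 hx
    rw [mem_singleton.1 ha]
    exact WithTop.coe_le_coe.2 (Nat.le_add_right a y)

theorem Nat.mul_eq_max_iff {a b : ℕ} (ha : 0 < a) (hb : 0 < b) :
    a * b = max a b ↔ a = 1 ∨ b = 1 := by
  constructor
  · intro h
    by_contra! hab
    rcases le_total a b with hle | hle
    · rw [max_eq_right hle] at h
      nlinarith [Nat.lt_of_le_of_ne ha hab.1.symm]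
    · rw [max_eq_left hle] at h
      nlinarith [Nat.lt_of_le_of_ne hb hab.2.symm]
  · rintro (rfl | rfl) <;> simp <;> omega

theorem Nat.sym2_eq_of_pow_add_pow_eq {b i j k l : ℕ} (hb : 2 ≤ b) (hij : i ≠ j) (hkl : k ≠ l)
    (h : b ^ i + b ^ j = b ^ k + b ^ l) : s(i, j) = s(k, l) := by
  have hpair : ({i, j} : Finset ℕ) = {k, l} := by
    apply geomSum_injective hb
    simpa only [sum_pair hij, sum_pair hkl] using h
  ext x
  simpa only [Sym2.mem_iff, mem_insert, mem_singleton] using (congrArg (x ∈ ·) hpair).to_iff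

def mixedRadixBlock (m n : ℕ) : Fin 2 → Finset ℕ :=
  ![range m, (range n).image (m * ·)]

section mixedRadixBlock

variable {m n : ℕ}

theorem mixedRadixBlock_add_of_ne {i j : Fin 2} (h : i ≠ j) :
    mixedRadixBlock m n i + mixedRadixBlock m n j = range (m * n) := by
  fin_cases i <;> fin_cases j <;> simp_all [mixedRadixBlock, range_add_image_mul_range, add_comm]

theorem card_mixedRadixBlock (hm : 0 < m) (i : Fin 2) : #(mixedRadixBlock m n i) = ![m, n] i := by
  fin_cases i
  · simp [mixedRadixBlock]
  · simp [mixedRadixBlock, card_image_of_injective _ (mul_right_injective₀ hm.ne')]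

theorem card_mul_card_mixedRadixBlock_of_ne (hm : 0 < m) {i j : Fin 2} (h : i ≠ j) :
    #(mixedRadixBlock m n i) * #(mixedRadixBlock m n j) = m * n := by
  fin_cases i <;> fin_cases j <;> simp_all [card_mixedRadixBlock hm, mul_comm]

theorem one_lt_card_mixedRadixBlock (hm : 1 < m) (hn : 1 < n) (i : Fin 2) :
    1 < #(mixedRadixBlock m n i) := by
  fin_cases i <;> simpa [card_mixedRadixBlock (zero_lt_one.trans hm)]

theorem zero_mem_mixedRadixBlock (hm : 0 < m) (hn : 0 < n) (i : Fin 2) :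
    0 ∈ mixedRadixBlock m n i := by
  fin_cases i
  · exact mem_range.2 hm
  · exact mem_image.2 ⟨0, mem_range.2 hn, mul_zero m⟩

end mixedRadixBlock

namespace IsStrongIASI

variable {V : Type*} {G : SimpleGraph V} {f : V → Finset ℕ} {u v : V}

theorem card_add_eq_max_iff (hf : IsStrongIASI G f) (h : G.Adj u v) :
    #(f u + f v) = max #(f u) #(f v) ↔ #(f u) = 1 ∨ #(f v) = 1 := by
  rw [hf.2 h]
  exact Nat.mul_eq_max_iff (hf.1.2.1 u).card_pos (hf.1.2.1 v).card_pos

theorem not_isWeaklyUniformIASI (hf : IsStrongIASI G f) (h : G.Adj u v) (hu : 1 < #(f u))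
    (hv : 1 < #(f v)) (k : ℕ) : ¬ IsWeaklyUniformIASI G f k := fun hw =>
  ((hf.card_add_eq_max_iff h).1 (hw.2 h).1).elim hu.ne' hv.ne'

end IsStrongIASI

theorem IsStronglyUniformIASI.exists_eq_mul_of_not_isWeaklyUniformIASI {V : Type*}
    {G : SimpleGraph V} {f : V → Finset ℕ} {k : ℕ} (hf : IsStronglyUniformIASI G f k)
    (hw : ¬ IsWeaklyUniformIASI G f k) : ∃ m n : ℕ, 1 < m ∧ 1 < n ∧ k = m * n := by
  obtain ⟨u, v, h, hne⟩ : ∃ u v, G.Adj u v ∧ #(f u + f v) ≠ max #(f u) #(f v) := by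
    by_contra! hmax
    exact hw ⟨hf.1.1, fun u v h => ⟨hmax u v h, hf.2 h⟩⟩
  rw [Ne, hf.1.card_add_eq_max_iff h, not_or] at hne
  have hu := (hf.1.1.2.1 u).card_pos
  have hv := (hf.1.1.2.1 v).card_pos
  exact ⟨#(f u), #(f v), by omega, by omega, (hf.2 h).symm.trans (hf.1.2 h)⟩

section blockIndexer

variable {V : Type*} {G : SimpleGraph V}

def blockIndexer (c : G.Coloring (Fin 2)) (ι : V → ℕ) (m n : ℕ) (v : V) : Finset ℕ :=
  {2 ^ ι v} + mixedRadixBlock m n (c v)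

variable (c : G.Coloring (Fin 2)) {ι : V → ℕ} {m n : ℕ}

theorem card_blockIndexer (v : V) : #(blockIndexer c ι m n v) = #(mixedRadixBlock m n (c v)) :=
  card_singleton_add _ _

theorem blockIndexer_add_of_adj {u v : V} (h : G.Adj u v) :
    blockIndexer c ι m n u + blockIndexer c ι m n v = {2 ^ ι u + 2 ^ ι v} + range (m * n) := by
  rw [blockIndexer, blockIndexer, add_add_add_comm, singleton_add_singleton,
    mixedRadixBlock_add_of_ne (c.valid h)]

theorem isIASI_blockIndexer (hι : Injective ι) (hm : 0 < m) (hn : 0 < n) :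
    IsIASI G (blockIndexer c ι m n) := by
  have hmin (v : V) : (blockIndexer c ι m n v).min = ↑(2 ^ ι v) :=
    min_singleton_add_of_zero_mem _ (zero_mem_mixedRadixBlock hm hn _)
  refine ⟨fun u v huv => ?_, fun v => ⟨_, mem_of_min (hmin v)⟩, fun u v u' v' h h' huv => ?_⟩
  · have hbase := congrArg Finset.min huv
    rw [hmin, hmin] at hbase
    exact hι (Nat.pow_right_injective le_rfl (WithTop.coe_injective hbase))
  · rw [blockIndexer_add_of_adj c h, blockIndexer_add_of_adj c h'] at huv
    have hzero : 0 ∈ range (m * n) := mem_range.2 (Nat.mul_pos hm hn)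
    have hbase := congrArg Finset.min huv
    rw [min_singleton_add_of_zero_mem _ hzero, min_singleton_add_of_zero_mem _ hzero] at hbase
    have hpair := Nat.sym2_eq_of_pow_add_pow_eq le_rfl (hι.ne h.ne) (hι.ne h'.ne)
      (WithTop.coe_injective hbase)
    exact Sym2.map.injective hι (by simpa using hpair)

theorem isStronglyUniformIASI_blockIndexer (hι : Injective ι) (hm : 0 < m) (hn : 0 < n) :
    IsStronglyUniformIASI G (blockIndexer c ι m n) (m * n) := by
  have hcard {u v : V} (h : G.Adj u v) :
      #(blockIndexer c ι m n u + blockIndexer c ι m n v) = m * n := by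
    rw [blockIndexer_add_of_adj c h, card_singleton_add, card_range]
  refine ⟨⟨isIASI_blockIndexer c hι hm hn, fun u v h => ?_⟩, fun u v h => hcard h⟩
  rw [hcard h, card_blockIndexer, card_blockIndexer,
    card_mul_card_mixedRadixBlock_of_ne hm (c.valid h)]

end blockIndexer

theorem bipartite_strong_not_weak_iff_composite_general {V : Type*} [Fintype V] (G : SimpleGraph V)
    (hG : G.Colorable 2) (he : G.edgeSet.Nonempty) (k : ℕ) :
    (∃ f : V → Finset ℕ, IsStronglyUniformIASI G f k ∧ ¬ IsWeaklyUniformIASI G f k) ↔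
      ∃ m n : ℕ, 1 < m ∧ 1 < n ∧ k = m * n := by
  refine ⟨fun ⟨f, hs, hw⟩ => hs.exists_eq_mul_of_not_isWeaklyUniformIASI hw, ?_⟩
  rintro ⟨m, n, hm, hn, rfl⟩
  obtain ⟨c⟩ := hG
  obtain ⟨ι, hι⟩ := exists_injective_nat V
  obtain ⟨⟨u, v⟩, h⟩ := he
  have hs := isStronglyUniformIASI_blockIndexer c hι (by omega : 0 < m) (by omega : 0 < n)
  refine ⟨_, hs, hs.1.not_isWeaklyUniformIASI h ?_ ?_ _⟩ <;>
    rw [card_blockIndexer] <;> exact one_lt_card_mixedRadixBlock hm hn _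

/-- A finite bipartite simple graph with at least one edge admits a strongly
`k`-uniform IASI which is not a weakly `k`-uniform IASI iff `k` is composite. -/
theorem bipartite_strong_not_weak_iff_composite {V : Type*} [Fintype V] (G : SimpleGraph V)
    (hG : G.Colorable 2) (he : G.edgeSet.Nonempty) (k : ℕ) (hk : 0 < k) :
    (∃ f : V → Finset ℕ, IsStronglyUniformIASI G f k ∧ ¬ IsWeaklyUniformIASI G f k) ↔
      ∃ m n : ℕ, 1 < m ∧ 1 < n ∧ k = m * n :=
  bipartite_strong_not_weak_iff_composite_general G hG he k
end

section
/- Let n ≥ 3 and let f be a strongly k-uniform integer additive set-indexer of the complete graph K_n. Then f is a (k, l)-completely uniform IASI where l = √k; that is, every vertex of K_n has set-indexing number l with l² = k (in particular k is a perfect square). -/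
open Pointwise

/-! In `K_n` any two vertices `u, v` have a common neighbour `w` once `n ≥ 3`, and
`|f u| · |f w| = k = |f v| · |f w|` with `|f w| > 0` forces `|f u| = |f v|`. So all set-indexing
numbers equal some `l`, and any edge gives `l · l = k`. -/

theorem Fintype.exists_ne_and_ne_of_two_lt_card {α : Type*} [Fintype α] (h : 2 < Fintype.card α)
    (a b : α) : ∃ c, c ≠ a ∧ c ≠ b := by
  classical
  have hcard : ({a, b} : Finset α).card < (Finset.univ : Finset α).card :=
    Finset.card_le_two.trans_lt h
  obtain ⟨c, -, hc⟩ := Finset.exists_mem_notMem_of_card_lt_card hcard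
  simp only [Finset.mem_insert, Finset.mem_singleton, not_or] at hc
  exact ⟨c, hc⟩

namespace IsStronglyUniformIASI

variable {V : Type*} {G : SimpleGraph V} {f : V → Finset ℕ} {k : ℕ}

theorem card_pos (hf : IsStronglyUniformIASI G f k) (v : V) : 0 < (f v).card :=
  (hf.1.1.2.1 v).card_pos

theorem card_eq_of_adj_of_adj (hf : IsStronglyUniformIASI G f k) {u v w : V} (huw : G.Adj u w)
    (hvw : G.Adj v w) : (f u).card = (f v).card :=
  Nat.eq_of_mul_eq_mul_right (hf.card_pos w)
    ((hf.card_mul_card_eq huw).trans (hf.card_mul_card_eq hvw).symm)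

theorem card_eq_of_completeGraph [Fintype V] (hV : 2 < Fintype.card V)
    (hf : IsStronglyUniformIASI (⊤ : SimpleGraph V) f k) (u v : V) : (f u).card = (f v).card := by
  obtain ⟨w, hwu, hwv⟩ := Fintype.exists_ne_and_ne_of_two_lt_card hV u v
  exact hf.card_eq_of_adj_of_adj hwu.symm hwv.symm

end IsStronglyUniformIASI

/-- For `n ≥ 3`, a strongly `k`-uniform IASI of the complete graph `K_n` is a
`(k, l)`-completely uniform IASI with `l = √k`: every vertex has set-indexing number `l`
and `l² = k` (in particular `k` is a perfect square). -/
theorem completeGraph_stronglyUniform_is_completelyUniform (n k : ℕ) (hn : 3 ≤ n)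
    (f : Fin n → Finset ℕ) (hf : IsStronglyUniformIASI (⊤ : SimpleGraph (Fin n)) f k) :
    ∃ l : ℕ, l * l = k ∧ ∀ v : Fin n, (f v).card = l := by
  have hcard : 2 < Fintype.card (Fin n) := by rw [Fintype.card_fin]; omega
  let u : Fin n := ⟨0, by omega⟩
  obtain ⟨w, hwu⟩ := Fintype.exists_ne_of_one_lt_card (by omega) u
  refine ⟨(f u).card, ?_, fun v => hf.card_eq_of_completeGraph hcard v u⟩
  calc (f u).card * (f u).card = (f u).card * (f w).card := by
        rw [hf.card_eq_of_completeGraph hcard w u]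
    _ = k := hf.card_mul_card_eq hwu.symm
end

section
/- Let k be a positive integer that is not a perfect square. Then a finite simple graph G without isolated vertices admits a strongly k-uniform integer additive set-indexer if and only if G is bipartite (equivalently, every connected component of G is bipartite). -/
open Pointwise

/-!
If `|f(u)| · |f(v)| = k` on every edge and `k` is not a square, the two factors differ, so
exactly one of them is below `√k`; comparing `|f(v)|²` with `k` is therefore a proper
2-colouring. Conversely, number the `n` vertices by `ι` and give a vertex on one side the
singleton `{ι u}` and a vertex on the other side the `k` multiples `n · m` with
`m ∈ [k(ι v + 1), k(ι v + 1) + k)`. Every element `x` of an edge sum `f(u) + f(v)` then has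
base-`n` digit `x % n = ι u` and `x / n / k = ι v + 1`, so the sum determines the edge.
-/

theorem mul_self_lt_iff_lt_mul_self_of_mul_eq {a b k : ℕ} (hab : a * b = k)
    (hk : ¬∃ l, l * l = k) : a * a < k ↔ k < b * b := by
  have hne : a ≠ b := by rintro rfl; exact hk ⟨a, hab⟩
  have hk0 : k ≠ 0 := by rintro rfl; exact hk ⟨0, rfl⟩
  rcases Nat.lt_or_gt_of_ne hne with h | h
  · have ha : 0 < a := Nat.pos_of_ne_zero (by rintro rfl; omega)
    constructor <;> intro <;> nlinarith
  · have hb : 0 < b := Nat.pos_of_ne_zero (by rintro rfl; omega)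
    constructor <;> intro <;> nlinarith

theorem Nat.div_eq_of_mem_Ico {k m c : ℕ} (hm : m ∈ Finset.Ico (k * c) (k * c + k)) :
    m / k = c := by
  rw [Finset.mem_Ico] at hm
  exact Nat.div_eq_of_lt_le (by linarith) (by linarith)

theorem SimpleGraph.colorable_two_of_adj_mul_eq {V : Type*} {G : SimpleGraph V} {k : ℕ}
    {w : V → ℕ} (hw : ∀ ⦃u v⦄, G.Adj u v → w u * w v = k) (hk : ¬∃ l, l * l = k) :
    G.Colorable 2 := by
  refine ⟨G.recolorOfEquiv finTwoEquiv.symm (Coloring.mk (fun v => decide (w v * w v < k)) ?_)⟩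
  intro u v huv hcol
  have hu := mul_self_lt_iff_lt_mul_self_of_mul_eq (hw huv) hk
  simp only [decide_eq_decide] at hcol
  refine hk ⟨w v, ?_⟩
  rcases lt_trichotomy (w v * w v) k with h | h | h
  · exact absurd (hu.1 (hcol.2 h)) h.not_gt
  · exact h
  · exact absurd (hcol.1 (hu.2 h)) h.not_gt

theorem IsStronglyUniformIASI.card_mul_card {V : Type*} {G : SimpleGraph V} {f : V → Finset ℕ}
    {k : ℕ} (hf : IsStronglyUniformIASI G f k) ⦃u v : V⦄ (huv : G.Adj u v) :
    (f u).card * (f v).card = k :=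
  (hf.1.2 huv).symm.trans (hf.2 huv)

theorem Sym2.apply_eq_apply_of_mk_eq {α β : Type*} {g : α → α → β} (hg : ∀ x y, g x y = g y x)
    {u v a b : α} (h : s(u, v) = s(a, b)) : g u v = g a b :=
  congrArg (Sym2.lift ⟨g, hg⟩) h

theorem Sym2.exists_mk_eq_of_ne_bool {V : Type*} {side : V → Bool} {u v : V}
    (h : side u ≠ side v) : ∃ a b, side a = false ∧ side b = true ∧ s(u, v) = s(a, b) := by
  cases hu : side u <;> cases hv : side v <;> simp only [hu, hv, ne_eq, not_true_eq_false] at h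
  · exact ⟨u, v, hu, hv, rfl⟩
  · exact ⟨v, u, hv, hu, Sym2.eq_swap⟩

section BipartiteIndexer

variable {V : Type*} (n k : ℕ) (ι : V → ℕ) (side : V → Bool)

def bipartiteIndexer (v : V) : Finset ℕ :=
  if side v then (Finset.Ico (k * (ι v + 1)) (k * (ι v + 1) + k)).image (n * ·) else {ι v}

def bipartiteCode (v : V) : ℕ × ℕ :=
  if side v then (0, ι v + 1) else (ι v, 0)

variable {n k ι side}

theorem bipartiteCode_injective (hι : Function.Injective ι) :
    Function.Injective (bipartiteCode ι side) := by
  intro a b h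
  cases ha : side a <;> cases hb : side b <;> simp [bipartiteCode, ha, hb] at h
  all_goals exact hι h

theorem mod_div_div_of_mem_bipartiteIndexer (hι : ∀ v, ι v < n) {v : V} {x : ℕ}
    (hx : x ∈ bipartiteIndexer n k ι side v) : (x % n, x / n / k) = bipartiteCode ι side v := by
  unfold bipartiteIndexer at hx
  unfold bipartiteCode
  cases hv : side v <;> simp only [hv, if_true, if_false, Bool.false_eq_true] at hx ⊢
  · rw [Finset.mem_singleton.1 hx, Nat.mod_eq_of_lt (hι v), Nat.div_eq_of_lt (hι v),
      Nat.zero_div]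
  · obtain ⟨m, hm, rfl⟩ := Finset.mem_image.1 hx
    rw [Nat.mul_mod_right, Nat.mul_div_cancel_left _ (Nat.zero_lt_of_lt (hι v)),
      Nat.div_eq_of_mem_Ico hm]

theorem mod_div_div_of_mem_add_bipartiteIndexer (hι : ∀ v, ι v < n) {u v : V}
    (hu : side u = false) (hv : side v = true) {x : ℕ}
    (hx : x ∈ bipartiteIndexer n k ι side u + bipartiteIndexer n k ι side v) :
    x % n = ι u ∧ x / n / k = ι v + 1 := by
  simp only [bipartiteIndexer, hu, hv, if_true, if_false, Bool.false_eq_true,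
    Finset.singleton_add, Finset.mem_vadd_finset, Finset.mem_image] at hx
  obtain ⟨_, ⟨m, hm, rfl⟩, rfl⟩ := hx
  refine ⟨?_, ?_⟩
  · rw [vadd_eq_add, Nat.add_mul_mod_self_left, Nat.mod_eq_of_lt (hι u)]
  · rw [vadd_eq_add, Nat.add_mul_div_left _ _ (Nat.zero_lt_of_lt (hι u)),
      Nat.div_eq_of_lt (hι u), zero_add, Nat.div_eq_of_mem_Ico hm]

theorem bipartiteIndexer_nonempty (hk : k ≠ 0) (v : V) :
    (bipartiteIndexer n k ι side v).Nonempty := by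
  unfold bipartiteIndexer
  split_ifs
  · exact ⟨_, Finset.mem_image_of_mem _ (Finset.mem_Ico.2 ⟨le_rfl, by omega⟩)⟩
  · exact Finset.singleton_nonempty _

theorem bipartiteIndexer_injective (hι_inj : Function.Injective ι) (hι : ∀ v, ι v < n)
    (hk : k ≠ 0) : Function.Injective (bipartiteIndexer n k ι side) := by
  intro a b h
  obtain ⟨x, hx⟩ := bipartiteIndexer_nonempty (n := n) (ι := ι) (side := side) hk a
  apply bipartiteCode_injective hι_inj
  rw [← mod_div_div_of_mem_bipartiteIndexer hι hx,
    ← mod_div_div_of_mem_bipartiteIndexer hι (h ▸ hx)]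

theorem eq_and_eq_of_bipartiteIndexer_add_eq (hι_inj : Function.Injective ι) (hι : ∀ v, ι v < n)
    (hk : k ≠ 0) {u v u' v' : V} (hu : side u = false) (hv : side v = true)
    (hu' : side u' = false) (hv' : side v' = true)
    (h : bipartiteIndexer n k ι side u + bipartiteIndexer n k ι side v =
      bipartiteIndexer n k ι side u' + bipartiteIndexer n k ι side v') : u = u' ∧ v = v' := by
  obtain ⟨x, hx⟩ := (bipartiteIndexer_nonempty (n := n) (ι := ι) (side := side) hk u).add
    (bipartiteIndexer_nonempty hk v)
  have hd := mod_div_div_of_mem_add_bipartiteIndexer hι hu hv hx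
  have hd' := mod_div_div_of_mem_add_bipartiteIndexer hι hu' hv' (h ▸ hx)
  exact ⟨hι_inj (hd.1.symm.trans hd'.1), hι_inj (by omega)⟩

theorem bipartiteIndexer_of_false {v : V} (hv : side v = false) :
    bipartiteIndexer n k ι side v = {ι v} := by
  simp [bipartiteIndexer, hv]

theorem card_bipartiteIndexer_of_true (hι : ∀ v, ι v < n) {v : V} (hv : side v = true) :
    (bipartiteIndexer n k ι side v).card = k := by
  rw [bipartiteIndexer, if_pos hv,
    Finset.card_image_of_injective _ (mul_right_injective₀ (Nat.zero_lt_of_lt (hι v)).ne'),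
    Nat.card_Ico, Nat.add_sub_cancel_left]

theorem card_add_bipartiteIndexer (hι : ∀ v, ι v < n) {u v : V} (hu : side u = false)
    (hv : side v = true) :
    (bipartiteIndexer n k ι side u + bipartiteIndexer n k ι side v).card = k := by
  rw [bipartiteIndexer_of_false hu, Finset.card_singleton_add, card_bipartiteIndexer_of_true hι hv]

theorem card_mul_card_bipartiteIndexer (hι : ∀ v, ι v < n) {u v : V} (hu : side u = false)
    (hv : side v = true) :
    (bipartiteIndexer n k ι side u).card * (bipartiteIndexer n k ι side v).card = k := by
  rw [bipartiteIndexer_of_false hu, Finset.card_singleton, card_bipartiteIndexer_of_true hι hv,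
    one_mul]

end BipartiteIndexer

theorem exists_isStronglyUniformIASI_of_colorable_two {V : Type*} [Finite V]
    {G : SimpleGraph V} (hG : G.Colorable 2) {k : ℕ} (hk : k ≠ 0) :
    ∃ f : V → Finset ℕ, IsStronglyUniformIASI G f k := by
  obtain ⟨n, ⟨e⟩⟩ := Finite.exists_equiv_fin V
  obtain ⟨C⟩ := hG
  let c := G.recolorOfEquiv finTwoEquiv C
  let ι : V → ℕ := fun v => e v
  have hι_inj : Function.Injective ι := Fin.val_injective.comp e.injective
  have hι : ∀ v, ι v < n := fun v => (e v).isLt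
  have orient : ∀ ⦃u v⦄, G.Adj u v → ∃ a b, c a = false ∧ c b = true ∧ s(u, v) = s(a, b) :=
    fun _ _ huv => Sym2.exists_mk_eq_of_ne_bool (c.valid huv)
  let f := bipartiteIndexer n k ι c
  have hcard : ∀ ⦃u v⦄, G.Adj u v → (f u + f v).card = k ∧ (f u).card * (f v).card = k := by
    intro u v huv
    obtain ⟨a, b, ha, hb, hs⟩ := orient huv
    rw [Sym2.apply_eq_apply_of_mk_eq (g := fun x y => (f x + f y).card)
        (fun _ _ => by rw [add_comm]) hs,
      Sym2.apply_eq_apply_of_mk_eq (g := fun x y => (f x).card * (f y).card)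
        (fun _ _ => mul_comm _ _) hs]
    exact ⟨card_add_bipartiteIndexer hι ha hb, card_mul_card_bipartiteIndexer hι ha hb⟩
  refine ⟨f, ⟨⟨bipartiteIndexer_injective hι_inj hι hk, bipartiteIndexer_nonempty hk, ?_⟩,
    fun u v huv => (hcard huv).1.trans (hcard huv).2.symm⟩, fun u v huv => (hcard huv).1⟩
  intro u v u' v' huv huv' h
  obtain ⟨a, b, ha, hb, hs⟩ := orient huv
  obtain ⟨a', b', ha', hb', hs'⟩ := orient huv'
  have hsum : ∀ x y, f x + f y = f y + f x := fun _ _ => add_comm _ _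
  rw [Sym2.apply_eq_apply_of_mk_eq hsum hs, Sym2.apply_eq_apply_of_mk_eq hsum hs'] at h
  obtain ⟨rfl, rfl⟩ := eq_and_eq_of_bipartiteIndexer_add_eq hι_inj hι hk ha hb ha' hb' h
  rw [hs, hs']

theorem stronglyUniform_nonSquare_iff_bipartite_general {V : Type*} [Fintype V] (G : SimpleGraph V)
    (k : ℕ) (hsq : ¬ ∃ l : ℕ, l * l = k) :
    (∃ f : V → Finset ℕ, IsStronglyUniformIASI G f k) ↔ G.Colorable 2 := by
  refine ⟨fun ⟨f, hf⟩ => SimpleGraph.colorable_two_of_adj_mul_eq hf.card_mul_card hsq,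
    fun hG => exists_isStronglyUniformIASI_of_colorable_two hG ?_⟩
  rintro rfl
  exact hsq ⟨0, rfl⟩

/-- For a positive integer `k` that is not a perfect square, a finite simple graph
`G` without isolated vertices admits a strongly `k`-uniform IASI iff `G` is bipartite. -/
theorem stronglyUniform_nonSquare_iff_bipartite {V : Type*} [Fintype V] (G : SimpleGraph V)
    (k : ℕ) (hk : 0 < k) (hsq : ¬ ∃ l : ℕ, l * l = k) (hiso : ∀ v : V, ∃ u : V, G.Adj v u) :
    (∃ f : V → Finset ℕ, IsStronglyUniformIASI G f k) ↔ G.Colorable 2 :=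
  stronglyUniform_nonSquare_iff_bipartite_general G k hsq
end

section
/- Let G be a finite connected non-bipartite simple graph and let f be a strongly k-uniform integer additive set-indexer of G. Then k is a perfect square and f is (k, l)-completely uniform with l = √k; that is, every vertex of G has set-indexing number l where l² = k. -/
open Pointwise

/-!
With `c v = |f v| > 0`, strong `k`-uniformity says `c u * c v = k` on every edge. Cancelling along
a walk, `c` agrees at the ends of an even walk, and its values at the ends of an odd walk multiply
to `k`. A non-bipartite graph has an odd closed walk, at `u` say, so `c u * c u = k`; connectedness
then gives, for every `v`, a walk from `u` whose parity forces `c v = c u` either way.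
-/

namespace SimpleGraph.Walk

variable {V M : Type*} [CommMonoidWithZero M] [IsCancelMulZero M]
  {G : SimpleGraph V} {c : V → M} {k : M}

theorem eq_of_even_length_and_mul_eq_of_odd_length (hc : ∀ v, c v ≠ 0)
    (hk : ∀ ⦃u v⦄, G.Adj u v → c u * c v = k) {u v : V} (p : G.Walk u v) :
    (Even p.length → c u = c v) ∧ (Odd p.length → c u * c v = k) := by
  induction p with
  | nil => simp
  | @cons u w v huw p ih =>
    rw [length_cons, Nat.even_add_one, Nat.odd_add_one, Nat.not_even_iff_odd, Nat.not_odd_iff_even]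
    refine ⟨fun hodd => mul_right_cancel₀ (hc w) ?_, fun heven => ?_⟩
    · rw [hk huw, ← ih.2 hodd, mul_comm]
    · rw [← ih.1 heven, hk huw]

end SimpleGraph.Walk

theorem connected_nonBipartite_stronglyUniform_general {V : Type*} (G : SimpleGraph V)
    (hconn : G.Connected) (hnb : ¬ G.Colorable 2) (f : V → Finset ℕ) (k : ℕ)
    (hf : IsStronglyUniformIASI G f k) :
    ∃ l : ℕ, l * l = k ∧ ∀ v : V, (f v).card = l := by
  obtain ⟨⟨⟨-, hne, -⟩, hstrong⟩, hk⟩ := hf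
  set c : V → ℕ := fun v => (f v).card
  have hc : ∀ v, c v ≠ 0 := fun v => (hne v).card_pos.ne'
  have hmul : ∀ ⦃u v⦄, G.Adj u v → c u * c v = k := fun _ _ h => (hstrong h).symm.trans (hk h)
  obtain ⟨u, w, hodd⟩ : ∃ u, ∃ w : G.Walk u u, Odd w.length := by
    simpa [SimpleGraph.two_colorable_iff_forall_loop_even] using hnb
  have hu : c u * c u = k := (w.eq_of_even_length_and_mul_eq_of_odd_length hc hmul).2 hodd
  refine ⟨c u, hu, fun v => ?_⟩
  obtain ⟨p⟩ := hconn.preconnected u v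
  have hp := p.eq_of_even_length_and_mul_eq_of_odd_length hc hmul
  rcases Nat.even_or_odd p.length with heven | hodd
  · exact (hp.1 heven).symm
  · exact mul_left_cancel₀ (hc u) ((hp.2 hodd).trans hu.symm)

/-- If `G` is a finite connected non-bipartite simple graph and `f` is a strongly
`k`-uniform IASI of `G`, then `k` is a perfect square and `f` is `(k, l)`-completely uniform
with `l = √k`: every vertex has set-indexing number `l` where `l² = k`. -/
theorem connected_nonBipartite_stronglyUniform {V : Type*} [Fintype V] (G : SimpleGraph V)
    (hconn : G.Connected) (hnb : ¬ G.Colorable 2) (f : V → Finset ℕ) (k : ℕ)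
    (hf : IsStronglyUniformIASI G f k) :
    ∃ l : ℕ, l * l = k ∧ ∀ v : V, (f v).card = l :=
  connected_nonBipartite_stronglyUniform_general G hconn hnb f k hf
end

section
/- Let G be a finite connected non-bipartite simple graph and let k be a positive integer. Then G admits a strongly k-uniform integer additive set-indexer if and only if k is a perfect square. -/
open Pointwise

/-! Sizes of adjacent labels multiply to `k`. If `k` is not a square, labels of size at most
`⌊√k⌋` and labels of larger size alternate along every edge, which 2-colours the graph.
Conversely, for `k = l²` label the vertex with index `i` by `(l + 1) ^ i • {1, …, l}`: a sum of
two such labels consists of base-`(l + 1)` numerals with two nonzero digits in distinct places,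
so all `l²` sums are distinct, and the least one, `(l + 1) ^ i + (l + 1) ^ j`, recovers the
edge. -/

open Finset

theorem eq_and_eq_of_add_mul_pow_eq {B p q a b a' b' : ℕ} (hpq : p < q) (ha : a < B)
    (ha' : a' < B) (h : a * B ^ p + b * B ^ q = a' * B ^ p + b' * B ^ q) : a = a' ∧ b = b' := by
  set c := B ^ (q - p)
  have hc : B ≤ c := Nat.le_self_pow (by omega) B
  have h' : a + c * b = a' + c * b' := by
    refine Nat.eq_of_mul_eq_mul_left (pow_pos (by omega : 0 < B) p) ?_
    calc B ^ p * (a + c * b) = a * B ^ p + b * (B ^ p * c) := by ring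
      _ = a' * B ^ p + b' * (B ^ p * c) := by rw [← pow_add, Nat.add_sub_cancel' hpq.le, h]
      _ = B ^ p * (a' + c * b') := by ring
  have hmod := congrArg (· % c) h'
  have hdiv := congrArg (· / c) h'
  simp only [Nat.add_mul_mod_self_left, Nat.mod_eq_of_lt (ha.trans_le hc),
    Nat.mod_eq_of_lt (ha'.trans_le hc)] at hmod
  simp only [Nat.add_mul_div_left _ _ (by omega : 0 < c), Nat.div_eq_of_lt (ha.trans_le hc),
    Nat.div_eq_of_lt (ha'.trans_le hc)] at hdiv
  exact ⟨hmod, by omega⟩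

theorem log_pow_add_pow {B a b : ℕ} (hB : 2 ≤ B) (hab : a < b) :
    Nat.log B (B ^ a + B ^ b) = b := by
  refine Nat.log_eq_of_pow_le_of_lt_pow (by omega) ?_
  calc B ^ a + B ^ b < 2 * B ^ b := by have := Nat.pow_lt_pow_right hB hab; omega
    _ ≤ B ^ (b + 1) := by rw [pow_succ']; exact Nat.mul_le_mul_right _ hB

theorem sym2_eq_of_pow_add_pow_eq {B a b c d : ℕ} (hB : 2 ≤ B) (hab : a ≠ b) (hcd : c ≠ d)
    (h : B ^ a + B ^ b = B ^ c + B ^ d) : s(a, b) = s(c, d) := by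
  wlog hab' : a < b generalizing a b
  · rw [Sym2.eq_swap]; exact this hab.symm (by omega) (by omega)
  wlog hcd' : c < d generalizing c d
  · rw [Sym2.eq_swap (a := c)]; exact this hcd.symm (by omega) (by omega)
  have hbd : b = d := by
    simpa [log_pow_add_pow hB hab', log_pow_add_pow hB hcd'] using congrArg (Nat.log B) h
  subst hbd
  rw [Nat.pow_right_injective hB (by omega : B ^ a = B ^ c)]

theorem IsLeast.add {α : Type*} [Add α] [Preorder α] [AddLeftMono α] [AddRightMono α]
    {s t : Set α} {a b : α} (ha : IsLeast s a) (hb : IsLeast t b) : IsLeast (s + t) (a + b) :=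
  ⟨Set.add_mem_add ha.1 hb.1, by
    rintro _ ⟨x, hx, y, hy, rfl⟩
    exact add_le_add (ha.2 hx) (hb.2 hy)⟩

theorem SimpleGraph.colorable_two_of_mul_eq_of_not_square {V : Type*} {G : SimpleGraph V} {k : ℕ}
    (c : V → ℕ) (hk : ¬ ∃ l, l * l = k) (hc : ∀ ⦃u v⦄, G.Adj u v → c u * c v = k) :
    G.Colorable 2 := by
  refine (Coloring.mk (fun v => decide (c v ≤ Nat.sqrt k)) fun {u v} huv => ?_).colorable
  have hcuv := hc huv
  have hne : Nat.sqrt k * Nat.sqrt k ≠ k := fun h => hk ⟨_, h⟩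
  have hlo := Nat.sqrt_le k
  have hhi := Nat.lt_succ_sqrt k
  have key : c u ≤ Nat.sqrt k ↔ Nat.sqrt k < c v := by
    constructor
    · intro hu; by_contra! hv; have := Nat.mul_le_mul hu hv; omega
    · intro hv; by_contra! hu; have := Nat.mul_le_mul hu hv; omega
  rw [ne_eq, decide_eq_decide, key, ← not_le]
  exact not_iff_self

def powerLabel (l p : ℕ) : Finset ℕ := (Icc 1 l).image (· * (l + 1) ^ p)

section powerLabel

variable {l : ℕ}

theorem mem_powerLabel {p x : ℕ} :
    x ∈ powerLabel l p ↔ ∃ a ∈ Icc 1 l, a * (l + 1) ^ p = x :=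
  mem_image

theorem card_powerLabel (p : ℕ) : #(powerLabel l p) = l := by
  rw [powerLabel, card_image_of_injective _ (mul_left_injective₀ (by positivity)),
    Nat.card_Icc, Nat.add_sub_cancel]

theorem card_powerLabel_add {p q : ℕ} (hpq : p ≠ q) :
    #(powerLabel l p + powerLabel l q) = l * l := by
  wlog hlt : p < q generalizing p q
  · rw [add_comm]; exact this hpq.symm (by omega)
  rw [card_add_iff.2, card_powerLabel, card_powerLabel]
  rintro ⟨x, y⟩ hxy ⟨x', y'⟩ hxy' heq
  simp only [Set.mem_prod, mem_coe, mem_powerLabel, mem_Icc] at hxy hxy'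
  obtain ⟨⟨a, ha, rfl⟩, ⟨b, -, rfl⟩⟩ := hxy
  obtain ⟨⟨a', ha', rfl⟩, ⟨b', -, rfl⟩⟩ := hxy'
  obtain ⟨rfl, rfl⟩ := eq_and_eq_of_add_mul_pow_eq hlt (by omega) (by omega) heq
  rfl

theorem isLeast_powerLabel (hl : 0 < l) (p : ℕ) :
    IsLeast (powerLabel l p : Set ℕ) ((l + 1) ^ p) := by
  refine ⟨mem_powerLabel.2 ⟨1, mem_Icc.2 ⟨le_rfl, hl⟩, one_mul _⟩, ?_⟩
  rintro _ hx
  obtain ⟨a, ha, rfl⟩ := mem_powerLabel.1 hx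
  exact Nat.le_mul_of_pos_left _ (mem_Icc.1 ha).1

theorem powerLabel_injective (hl : 0 < l) : Function.Injective (powerLabel l) := fun p q h =>
  Nat.pow_right_injective (by omega : 2 ≤ l + 1)
    ((isLeast_powerLabel hl p).unique (h ▸ isLeast_powerLabel hl q))

theorem sym2_eq_of_powerLabel_add_eq (hl : 0 < l) {p q p' q' : ℕ} (hpq : p ≠ q)
    (hpq' : p' ≠ q')
    (h : powerLabel l p + powerLabel l q = powerLabel l p' + powerLabel l q') :
    s(p, q) = s(p', q') := by
  have hleast (p q : ℕ) :
      IsLeast (↑(powerLabel l p + powerLabel l q) : Set ℕ) ((l + 1) ^ p + (l + 1) ^ q) := by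
    rw [coe_add]; exact (isLeast_powerLabel hl p).add (isLeast_powerLabel hl q)
  exact sym2_eq_of_pow_add_pow_eq (by omega) hpq hpq' ((hleast p q).unique (h ▸ hleast p' q'))

theorem isStronglyUniformIASI_powerLabel_comp {V : Type*} (G : SimpleGraph V) {e : V → ℕ}
    (he : Function.Injective e) (hl : 0 < l) :
    IsStronglyUniformIASI G (powerLabel l ∘ e) (l * l) := by
  have hcard : ∀ ⦃u v⦄, G.Adj u v → #(powerLabel l (e u) + powerLabel l (e v)) = l * l :=
    fun u v huv => card_powerLabel_add (he.ne huv.ne)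
  refine ⟨⟨⟨(powerLabel_injective hl).comp he,
    fun v => ⟨_, (isLeast_powerLabel hl (e v)).1⟩, fun u v u' v' huv hu'v' h => ?_⟩,
    fun u v huv => ?_⟩, hcard⟩
  · apply Sym2.map.injective he
    simpa using sym2_eq_of_powerLabel_add_eq hl (he.ne huv.ne) (he.ne hu'v'.ne) h
  · simp only [Function.comp_apply, hcard huv, card_powerLabel]

end powerLabel

theorem connected_nonBipartite_stronglyUniform_iff_square_general {V : Type*} [Fintype V]
    (G : SimpleGraph V) (hnb : ¬ G.Colorable 2) (k : ℕ) (hk : 0 < k) :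
    (∃ f : V → Finset ℕ, IsStronglyUniformIASI G f k) ↔ ∃ l : ℕ, l * l = k := by
  constructor
  · rintro ⟨f, ⟨-, hstrong⟩, hunif⟩
    by_contra hsquare
    exact hnb <| G.colorable_two_of_mul_eq_of_not_square (fun v => #(f v)) hsquare
      fun u v huv => (hstrong huv).symm.trans (hunif huv)
  · rintro ⟨l, rfl⟩
    exact ⟨_, isStronglyUniformIASI_powerLabel_comp G
      (Fin.val_injective.comp (Fintype.equivFin V).injective) (Nat.pos_of_mul_pos_left hk)⟩

/-- A finite connected non-bipartite simple graph admits a strongly `k`-uniform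
IASI iff `k` is a perfect square. -/
theorem connected_nonBipartite_stronglyUniform_iff_square {V : Type*} [Fintype V]
    (G : SimpleGraph V) (hconn : G.Connected) (hnb : ¬ G.Colorable 2) (k : ℕ) (hk : 0 < k) :
    (∃ f : V → Finset ℕ, IsStronglyUniformIASI G f k) ↔ ∃ l : ℕ, l * l = k :=
  connected_nonBipartite_stronglyUniform_iff_square_general G hnb k hk
end
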